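/- Let f_ε : ℝ^p → ℝ be a family of convex functions (ε > 0) and f : ℝ^p → ℝ a convex function with a unique minimizer u*. If f_ε converges pointwise to f as ε → 0⁺, then any choice of minimizers u_ε ∈ argmin f_ε converges to u* as ε → 0⁺ (assuming each f_ε attains a minimum). -/

import Mathlib

open Filter Topology Metric Set

/-!
Pointwise convergent convex functions on a finite-dimensional space are eventually bounded above
on a ball by their values at the finitely many vertices of a polytope containing it, hence bounded
below by reflection through the centre, hence equi-Lipschitz on a smaller ball; together with
convergence on a finite net this makes the convergence uniform on compact sets. The limit `g`
exceeds `g u*` by a positive margin on the sphere of radius `r` about `u*`, so eventually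
`f ε u* < f ε` on that sphere, and convexity of `f ε` then traps its minimizers in the ball.
-/

variable {E : Type*} [NormedAddCommGroup E] [NormedSpace ℝ E]

lemma ConvexOn.abs_le_of_le_on_ball {f : E → ℝ} {x₀ x : E} {r M : ℝ}
    (hf : ConvexOn ℝ (ball x₀ r) f) (hM : ∀ y ∈ ball x₀ r, f y ≤ M) (hx : x ∈ ball x₀ r) :
    |f x| ≤ max M (M - 2 * f x₀) := by
  set x' : E := (2 : ℝ) • x₀ - x
  have hx' : x' ∈ ball x₀ r := by
    rwa [mem_ball, dist_eq_norm, show x' - x₀ = x₀ - x by module, ← dist_eq_norm, dist_comm]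
  have hmid : f x₀ ≤ (1 / 2) * f x + (1 / 2) * f x' := by
    have h := hf.2 hx hx' (by norm_num : (0 : ℝ) ≤ 1 / 2) (by norm_num : (0 : ℝ) ≤ 1 / 2)
      (by norm_num)
    rwa [show (1 / 2 : ℝ) • x + (1 / 2 : ℝ) • x' = x₀ by module] at h
  rw [abs_le]
  constructor <;> linarith [hM x hx, hM x' hx', le_max_left M (M - 2 * f x₀),
    le_max_right M (M - 2 * f x₀)]

lemma ConvexOn.dist_le_of_lt_on_sphere {s : Set E} {f : E → ℝ} {x₀ u : E} {r : ℝ}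
    (hf : ConvexOn ℝ s f) (hx₀ : x₀ ∈ s) (hu : u ∈ s) (hr : 0 ≤ r)
    (hsphere : ∀ w ∈ sphere x₀ r, f x₀ < f w) (hfu : f u ≤ f x₀) : dist u x₀ ≤ r := by
  by_contra! hfar
  have hd : 0 < dist x₀ u := by rw [dist_comm]; exact hr.trans_lt hfar
  set t := r / dist x₀ u
  have ht : t ∈ Icc (0 : ℝ) 1 := by
    rw [dist_comm] at hfar
    exact ⟨div_nonneg hr hd.le, (div_le_one hd).2 hfar.le⟩
  set w := AffineMap.lineMap x₀ u t
  have hw : w ∈ sphere x₀ r := by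
    rw [mem_sphere, dist_lineMap_left, Real.norm_of_nonneg ht.1, div_mul_cancel₀ _ hd.ne']
  have hseg : w ∈ segment ℝ x₀ u := by
    rw [segment_eq_image_lineMap]; exact mem_image_of_mem _ ht
  have := hf.le_on_segment hx₀ hu hseg
  linarith [hsphere w hw, max_eq_left hfu]

section Convergence

variable {ι : Type*} {l : Filter ι}

lemma tendstoUniformlyOn_of_lipschitzOnWith {α : Type*} [PseudoMetricSpace α]
    {F : ι → α → ℝ} {f : α → ℝ} {s : Set α} {K : NNReal} (hs : IsCompact s)
    (hf : ContinuousOn f s) (hF : ∀ᶠ i in l, LipschitzOnWith K (F i) s)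
    (hlim : ∀ x ∈ s, Tendsto (F · x) l (𝓝 (f x))) : TendstoUniformlyOn F f l s := by
  rw [Metric.tendstoUniformlyOn_iff]
  intro ε hε
  obtain ⟨δ, hδ, hfδ⟩ := Metric.uniformContinuousOn_iff.1
    (hs.uniformContinuousOn_of_continuous hf) (ε / 3) (by positivity)
  set η := min δ (ε / 3 / (K + 1))
  have hKη : K * η < ε / 3 := calc
    K * η ≤ K * (ε / 3 / (K + 1)) := mul_le_mul_of_nonneg_left (min_le_right _ _) K.2
    _ < ε / 3 := by rw [mul_div_assoc', div_lt_iff₀ (by positivity)]; nlinarith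
  obtain ⟨t, hts, htfin, hcover⟩ := hs.finite_cover_balls (e := η) (by positivity)
  have hnet : ∀ᶠ i in l, ∀ y ∈ t, dist (f y) (F i y) < ε / 3 :=
    htfin.eventually_all.2 fun y hy => by
      simpa only [dist_comm] using Metric.tendsto_nhds.1 (hlim y (hts hy)) (ε / 3) (by positivity)
  filter_upwards [hF, hnet] with i hLip hi x hx
  obtain ⟨y, hy, hxy⟩ := mem_iUnion₂.1 (hcover hx)
  have hxy : dist x y < η := hxy
  have hfxy := hfδ x hx y (hts hy) (hxy.trans_le (min_le_left _ _))
  have hFxy : dist (F i y) (F i x) ≤ K * η := calc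
    dist (F i y) (F i x) ≤ K * dist y x := hLip.dist_le_mul y (hts hy) x hx
    _ ≤ K * η := by rw [dist_comm]; exact mul_le_mul_of_nonneg_left hxy.le K.2
  calc dist (f x) (F i x) ≤ dist (f x) (f y) + dist (f y) (F i y) + dist (F i y) (F i x) :=
        dist_triangle4 _ _ _ _
    _ < ε := by linarith [hi y hy]

lemma TendstoUniformlyOn.eventually_forall_lt_of_tendsto {α : Type*} [TopologicalSpace α]
    {F : ι → α → ℝ} {f : α → ℝ} {s : Set α} {x₀ : α} (hF : TendstoUniformlyOn F f l s)
    (hx₀ : Tendsto (F · x₀) l (𝓝 (f x₀))) (hs : IsCompact s) (hf : ContinuousOn f s)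
    (hlt : ∀ x ∈ s, f x₀ < f x) : ∀ᶠ i in l, ∀ x ∈ s, F i x₀ < F i x := by
  obtain ⟨a, ha, has⟩ := hs.exists_forall_le' hf hlt
  have hgap : 0 < (a - f x₀) / 2 := by linarith
  filter_upwards [hx₀.eventually (eventually_lt_nhds (by linarith : f x₀ < (f x₀ + a) / 2)),
    Metric.tendstoUniformlyOn_iff.1 hF _ hgap] with i hi₀ hi x hx
  linarith [(abs_lt.1 (Real.dist_eq _ _ ▸ hi x hx)).2, has x hx]

variable [FiniteDimensional ℝ E] {F : ι → E → ℝ} {f : E → ℝ}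

lemma exists_eventually_lipschitzOnWith_ball_of_convexOn
    (hF : ∀ᶠ i in l, ConvexOn ℝ univ (F i)) (hlim : ∀ x, Tendsto (F · x) l (𝓝 (f x)))
    (x₀ : E) (r : ℝ) : ∃ K, ∀ᶠ i in l, LipschitzOnWith K (F i) (ball x₀ r) := by
  obtain ⟨u, hu, -⟩ :=
    (convex_closedBall x₀ (r + 1)).exists_subset_interior_convexHull_finset_of_isCompact
      (isCompact_closedBall x₀ (r + 1)) (univ_mem (f := 𝓝ˢ _))
  obtain ⟨M, hM⟩ := (u.finite_toSet.image f).bddAbove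
  have hvert : ∀ᶠ i in l, ∀ y ∈ u, F i y < M + 1 :=
    (eventually_all_finset u).2 fun y hy => (hlim y).eventually
      (eventually_lt_nhds (by linarith [hM (mem_image_of_mem f hy)]))
  have hcentre : ∀ᶠ i in l, f x₀ - 1 < F i x₀ :=
    (hlim x₀).eventually (eventually_gt_nhds (by linarith))
  set B := max (M + 1) (M + 3 - 2 * f x₀)
  refine ⟨(2 * B).toNNReal, ?_⟩
  filter_upwards [hF, hvert, hcentre] with i hconv hi hi₀
  have hup : ∀ y ∈ ball x₀ (r + 1), F i y ≤ M + 1 := fun y hy => by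
    obtain ⟨z, hz, hle⟩ := hconv.exists_ge_of_mem_convexHull (subset_univ _)
      (interior_subset (hu (ball_subset_closedBall hy)))
    exact hle.trans (hi z hz).le
  have hball := hconv.subset (subset_univ _) (convex_ball x₀ (r + 1))
  simpa using hball.lipschitzOnWith_of_abs_le one_pos fun y hy =>
    (hball.abs_le_of_le_on_ball hup hy).trans (max_le_max le_rfl (by linarith))

theorem tendstoUniformlyOn_of_convexOn {s : Set E}
    (hF : ∀ᶠ i in l, ConvexOn ℝ univ (F i)) (hlim : ∀ x, Tendsto (F · x) l (𝓝 (f x)))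
    (hf : ContinuousOn f s) (hs : IsCompact s) : TendstoUniformlyOn F f l s := by
  obtain ⟨r, hr⟩ := hs.isBounded.subset_ball (0 : E)
  obtain ⟨K, hK⟩ := exists_eventually_lipschitzOnWith_ball_of_convexOn hF hlim 0 r
  exact tendstoUniformlyOn_of_lipschitzOnWith hs hf (hK.mono fun i hi => hi.mono hr)
    fun x _ => hlim x

end Convergence

theorem argmin_convergence_convex (p : ℕ)
    (f : ℝ → (Fin p → ℝ) → ℝ) (g : (Fin p → ℝ) → ℝ)
    (hf : ∀ ε : ℝ, 0 < ε → ConvexOn ℝ Set.univ (f ε))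
    (hg : ConvexOn ℝ Set.univ g)
    (ustar : Fin p → ℝ)
    (hmin : ∀ u, g ustar ≤ g u)
    (huniq : ∀ u, (∀ v, g u ≤ g v) → u = ustar)
    (hpt : ∀ u, Tendsto (fun ε => f ε u) (𝓝[>] 0) (𝓝 (g u)))
    (uε : ℝ → (Fin p → ℝ))
    (hargmin : ∀ ε : ℝ, 0 < ε → ∀ u, f ε (uε ε) ≤ f ε u) :
    Tendsto uε (𝓝[>] 0) (𝓝 ustar) := by
  have hgc : Continuous g := continuousOn_univ.1 (hg.continuousOn isOpen_univ)
  refine nhds_basis_closedBall.tendsto_right_iff.2 fun r hr => ?_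
  have hsphere : ∀ w ∈ sphere ustar r, g ustar < g w := fun w hw => by
    refine lt_of_not_ge fun hle => ?_
    obtain rfl := huniq w fun v => hle.trans (hmin v)
    exact hr.ne (by simpa using hw)
  have hunif := tendstoUniformlyOn_of_convexOn (eventually_nhdsWithin_of_forall hf) hpt
    hgc.continuousOn (isCompact_sphere ustar r)
  filter_upwards [hunif.eventually_forall_lt_of_tendsto (hpt ustar) (isCompact_sphere ustar r)
    hgc.continuousOn hsphere, self_mem_nhdsWithin] with ε hε_sphere hε
  exact (hf ε hε).dist_le_of_lt_on_sphere (mem_univ _) (mem_univ _) hr.le hε_sphere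
    (hargmin ε hε ustar)
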